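/- Let b be real with |1+2b| ≤ 1 and define f₂(z) = z(1 + 2(1+2b)z + z²)/((1+z)²(1-z²)) on the open unit disk D. Then for all z ∈ D \ {0}, Re((1+z)²f₂(z)/z) > 0. -/

import Mathlib

/-! With `c = 1 + 2b ∈ [-1, 1]` the expression is `(1 + 2cz + z²)/(1 - z²)`, which equals
`(1 + w)/(1 - w)` for `w = z · (z + c)/(1 + cz)`. The Möbius factor `(z + c)/(1 + cz)` maps the
unit disk into the closed unit disk, so `‖w‖ < 1`, and the Cayley transform `(1 + w)/(1 - w)`
maps the unit disk into the right half-plane. -/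

open Complex ComplexConjugate

theorem Complex.one_add_ne_zero_of_norm_lt_one {z : ℂ} (hz : ‖z‖ < 1) : 1 + z ≠ 0 := by
  simpa using (isUnit_one_sub_of_norm_lt_one (x := -z) (by simpa using hz)).ne_zero

theorem Complex.re_one_add_div_one_sub_pos {w : ℂ} (hw : ‖w‖ < 1) :
    0 < ((1 + w) / (1 - w)).re := by
  have hnum : ((1 + w) * conj (1 - w)).re = 1 - ‖w‖ ^ 2 := by
    simp only [← normSq_eq_norm_sq, mul_re, add_re, add_im, map_sub, map_one, sub_re, sub_im,
      one_re, one_im, conj_re, conj_im, normSq_apply]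
    ring
  rw [div_eq_mul_inv, inv_def, ← mul_assoc, re_mul_ofReal, hnum]
  refine mul_pos (by nlinarith [norm_nonneg w]) (inv_pos.mpr (normSq_pos.mpr ?_))
  simpa [sub_eq_add_neg] using one_add_ne_zero_of_norm_lt_one (z := -w) (by simpa using hw)

theorem Complex.norm_ofReal_mul_lt_one {c : ℝ} (hc : |c| ≤ 1) {z : ℂ} (hz : ‖z‖ < 1) :
    ‖(c : ℂ) * z‖ < 1 := by
  rw [norm_mul, norm_real, Real.norm_eq_abs]
  nlinarith [norm_nonneg z, abs_nonneg c]

theorem Complex.norm_add_ofReal_div_one_add_ofReal_mul_le_one {c : ℝ} (hc : |c| ≤ 1) {z : ℂ}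
    (hz : ‖z‖ < 1) : ‖(z + c) / (1 + c * z)‖ ≤ 1 := by
  have hcz : 1 + c * z ≠ 0 := one_add_ne_zero_of_norm_lt_one (norm_ofReal_mul_lt_one hc hz)
  have hdiff : ‖1 + c * z‖ ^ 2 - ‖z + c‖ ^ 2 = (1 - c ^ 2) * (1 - ‖z‖ ^ 2) := by
    simp only [← normSq_eq_norm_sq, normSq_apply, add_re, add_im, mul_re, mul_im, ofReal_re,
      ofReal_im, one_re, one_im]
    ring
  have hc2 : c ^ 2 ≤ 1 := by nlinarith [abs_le.mp hc, sq_abs c]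
  have hz2 : ‖z‖ ^ 2 < 1 := by nlinarith [norm_nonneg z]
  rw [norm_div, div_le_one (norm_pos_iff.mpr hcz)]
  nlinarith [mul_nonneg (sub_nonneg.mpr hc2) (sub_pos.mpr hz2).le, norm_nonneg (1 + c * z),
    norm_nonneg (z + c)]

theorem one_add_mul_add_sq_div_one_sub_sq {K : Type*} [Field K] {c z : K} (hcz : 1 + c * z ≠ 0) :
    (1 + 2 * c * z + z ^ 2) / (1 - z ^ 2) =
      (1 + z * ((z + c) / (1 + c * z))) / (1 - z * ((z + c) / (1 + c * z))) := by
  rw [mul_div_assoc', one_add_div hcz, one_sub_div hcz, div_div_div_cancel_right₀ hcz]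
  congr 1 <;> ring

theorem f2_in_class (b : ℝ) (hb : |1 + 2 * b| ≤ 1)
    (f₂ : ℂ → ℂ)
    (hf : ∀ z, f₂ z = z * (1 + 2 * (1 + 2 * b) * z + z ^ 2) / ((1 + z) ^ 2 * (1 - z ^ 2))) :
    ∀ z ∈ Metric.ball (0 : ℂ) 1, z ≠ 0 → 0 < ((1 + z) ^ 2 * f₂ z / z).re := by
  intro z hz hz0
  rw [mem_ball_zero_iff] at hz
  set c : ℝ := 1 + 2 * b
  have hcz : 1 + (c : ℂ) * z ≠ 0 :=
    one_add_ne_zero_of_norm_lt_one (norm_ofReal_mul_lt_one hb hz)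
  have hw : ‖z * ((z + c) / (1 + c * z))‖ < 1 := by
    rw [norm_mul]
    exact mul_lt_one_of_nonneg_of_lt_one_left (norm_nonneg z) hz
      (norm_add_ofReal_div_one_add_ofReal_mul_le_one hb hz)
  have h1z : (1 + z) ^ 2 ≠ 0 := pow_ne_zero 2 (one_add_ne_zero_of_norm_lt_one hz)
  have hreduce : (1 + z) ^ 2 * f₂ z / z = (1 + 2 * c * z + z ^ 2) / (1 - z ^ 2) := by
    rw [hf, mul_div_assoc', mul_div_mul_left _ _ h1z, mul_div_assoc, mul_div_cancel_left₀ _ hz0]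
    push_cast [c]
    ring
  rw [hreduce, one_add_mul_add_sq_div_one_sub_sq hcz]
  exact re_one_add_div_one_sub_pos hw
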